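/- Let (M_n, S_n)_{n≥0} be a null-homologous MRW with X_n = g(M_n) − g(M_{n−1}) P_π-a.s. Then exactly one of the following five alternatives holds: (NH-1) g ≡ 0 and S_n = 0 a.s. for all n ≥ 1; (NH-2) 0 ≠ sup_{i∈S}|g(i)| < ∞ and −∞ < liminf S_n ≤ limsup S_n < ∞ P_π-a.s.; (NH-3) −∞ = inf_i g(i) < sup_i g(i) < ∞, liminf S_n = −∞ and limsup S_n ∈ ℝ P_π-a.s.; (NH-4) −∞ < inf_i g(i) < sup_i g(i) = ∞, liminf S_n ∈ ℝ and limsup S_n = ∞ P_π-a.s.; (NH-5) inf_i g(i) = −∞, sup_i g(i) = ∞, liminf S_n = −∞ and limsup S_n = ∞ P_π-a.s. Moreover, whenever for † ∈ {>,<} all the ladder epochs σ_n^† are a.s. finite, the associated ladder chain (M_n^†)_{n≥0} is transient, i.e. P_i(M_n^† = i infinitely often) < 1 for all i ∈ S. -/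

import Mathlib

open MeasureTheory Filter Set ENNReal
open scoped Classical

noncomputable section

/-- A real sequence oscillates: its `limsup` (computed in `EReal`) is `+∞` and its
`liminf` is `-∞`. -/
def OscSeq (u : ℕ → ℝ) : Prop :=
  Filter.limsup (fun n => (u n : EReal)) Filter.atTop = ⊤ ∧
    Filter.liminf (fun n => (u n : EReal)) Filter.atTop = ⊥

/-- A **Markov random walk** `(M_n, S_n)_{n ≥ 0}` with countable, irreducible, positive
recurrent driving chain `M` on the state space `𝕊`, with transition probabilities `p`,
stationary distribution `π`, and conditionally independent increments `X` whose conditional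
law given the driving chain is governed by the stochastic kernel `K` from `𝕊²` to `ℝ`.
`P i` is the law of the whole walk given `M 0 = i`.  The field `pathLaw` prescribes all
finite-dimensional distributions; `recurrent` says that from any starting state every state
is visited infinitely often a.s. (irreducibility and recurrence), and `posRec` says that the
first return time to any state has finite mean (positive recurrence). -/
structure MRW (𝕊 : Type*) (Ω : Type*) [Countable 𝕊] [MeasurableSpace 𝕊]
    [MeasurableSingletonClass 𝕊] [MeasurableSpace Ω] where
  P : 𝕊 → Measure Ω
  isProb : ∀ i, IsProbabilityMeasure (P i)
  M : ℕ → Ω → 𝕊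
  X : ℕ → Ω → ℝ
  measM : ∀ n, Measurable (M n)
  measX : ∀ n, Measurable (X n)
  p : 𝕊 → 𝕊 → ℝ≥0∞
  π : 𝕊 → ℝ≥0∞
  K : 𝕊 → 𝕊 → Measure ℝ
  Kprob : ∀ i j, IsProbabilityMeasure (K i j)
  pathLaw : ∀ (i : 𝕊) (n : ℕ) (path : ℕ → 𝕊) (B : ℕ → Set ℝ),
    (∀ k, MeasurableSet (B k)) →
    P i {ω | (∀ k ≤ n, M k ω = path k) ∧ ∀ k, 1 ≤ k → k ≤ n → X k ω ∈ B k} =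
      (if path 0 = i then 1 else 0) *
        ∏ k ∈ Finset.range n, (p (path k) (path (k + 1)) * K (path k) (path (k + 1)) (B (k + 1)))
  recurrent : ∀ i j, P i {ω | ∀ N, ∃ n ≥ N, M n ω = j} = 1
  πpos : ∀ i, 0 < π i
  πsum : ∑' i, π i = 1
  πstat : ∀ j, ∑' i, π i * p i j = π j
  posRec : ∀ i, ∫⁻ ω, (↑(sInf {n : ℕ | 1 ≤ n ∧ M n ω = i}) : ℝ≥0∞) ∂P i < ⊤

namespace MRW

variable {𝕊 : Type*} {Ω : Type*} [Countable 𝕊] [MeasurableSpace 𝕊]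
  [MeasurableSingletonClass 𝕊] [MeasurableSpace Ω] (W : MRW 𝕊 Ω)

/-- The additive part: `S n = X 1 + ⋯ + X n`, `S 0 = 0`. -/
def S (n : ℕ) (ω : Ω) : ℝ := ∑ k ∈ Finset.range n, W.X (k + 1) ω

/-- The successive return times `τ n i` of the driving chain to the state `i`
(`τ 0 i = 0`); a.s. well defined by positive recurrence. -/
def τ (i : 𝕊) : ℕ → Ω → ℕ
  | 0, _ => 0
  | n + 1, ω => sInf {k : ℕ | τ i n ω < k ∧ W.M k ω = i}

/-- The stationary law `P_π = ∑ i, π i • P i` of the walk. -/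
def Pπ : Measure Ω := Measure.sum fun i => W.π i • W.P i

/-- The MRW is *null-homologous* if `X n = g (M n) - g (M (n-1))` `P_π`-a.s. for some
function `g` on the state space. -/
def NullHomologous : Prop :=
  ∃ g : 𝕊 → ℝ, ∀ n : ℕ, 1 ≤ n → ∀ᵐ ω ∂W.Pπ, W.X n ω = g (W.M n ω) - g (W.M (n - 1) ω)

/-- The MRW is *nontrivial* if it is not null-homologous. -/
def IsNontrivial : Prop := ¬W.NullHomologous

/-- Positive divergence: `S n → ∞` a.s. (under every `P i`). -/
def PosDiv : Prop := ∀ i, ∀ᵐ ω ∂W.P i, Tendsto (fun n => W.S n ω) atTop atTop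

/-- Negative divergence: `S n → -∞` a.s. (under every `P i`). -/
def NegDiv : Prop := ∀ i, ∀ᵐ ω ∂W.P i, Tendsto (fun n => W.S n ω) atTop atBot

/-- Oscillation: `limsup S n = ∞` and `liminf S n = -∞` a.s. (under every `P i`). -/
def OscDiv : Prop := ∀ i, ∀ᵐ ω ∂W.P i, OscSeq fun n => W.S n ω

/-- `S_{τ(i)}`, the first-cycle increment of the random walk embedded at `i`. -/
def Sτ (i : 𝕊) (ω : Ω) : ℝ := W.S (W.τ i 1 ω) ω

/-- `S_{τ(i)}⁺`. -/
def Sτpos (i : 𝕊) (ω : Ω) : ℝ := max (W.Sτ i ω) 0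

/-- `S_{τ(i)}⁻`. -/
def Sτneg (i : 𝕊) (ω : Ω) : ℝ := max (-W.Sτ i ω) 0

/-- `A_i(x) = E_i (S_{τ(i)}⁺ ∧ x) - E_i (S_{τ(i)}⁻ ∧ x)`. -/
def A (i : 𝕊) (x : ℝ) : ℝ :=
  ∫ ω, min (W.Sτpos i ω) x ∂W.P i - ∫ ω, min (W.Sτneg i ω) x ∂W.P i

/-- `A_i(x) > 0` for all sufficiently large `x`. -/
def AUltPos (i : 𝕊) : Prop := ∃ x₀ : ℝ, ∀ x ≥ x₀, 0 < W.A i x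

/-- The function `J_i`:  `J_i 0 = 1` and, for `x > 0`,
`J_i x = x / E_i (S_{τ(i)}⁺ ∧ x)` if `P i (S_{τ(i)} > 0) > 0`, and `J_i x = x` otherwise. -/
def J (i : 𝕊) (x : ℝ) : ℝ :=
  if x = 0 then 1
  else if 0 < W.P i {ω | 0 < W.Sτ i ω} then x / ∫ ω, min (W.Sτpos i ω) x ∂W.P i
  else x

/-- The function `J_i` for the reflected walk `(M_n, -S_n)`:  it has
`E_i (S_{τ(i)}⁻ ∧ x)` in the denominator. -/
def Jrefl (i : 𝕊) (x : ℝ) : ℝ :=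
  if x = 0 then 1
  else if 0 < W.P i {ω | W.Sτ i ω < 0} then x / ∫ ω, min (W.Sτneg i ω) x ∂W.P i
  else x

/-- `D^i = max_{0 < k ≤ τ(i)} S_k⁻`, the maximal downward excursion during the first
`i`-cycle (its `P i`-distribution is that of the generic copy `D^i`).  Including the index
`k = 0` is harmless since `S_0⁻ = 0`. -/
def D (i : 𝕊) (ω : Ω) : ℝ :=
  (Finset.range (W.τ i 1 ω + 1)).sup' Finset.nonempty_range_add_one fun k => max (-W.S k ω) 0

/-- The tail `V_i^α((x,∞)) = E_i (∑_{n=1}^{τ(i)} 1_{S_n⁻ > x})^α` of the excursion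
measure `V_i^α`. -/
def Vtail (i : 𝕊) (α : ℝ) (x : ℝ) : ℝ≥0∞ :=
  ∫⁻ ω,
    ((((Finset.Icc 1 (W.τ i 1 ω)).filter fun n => x < max (-W.S n ω) 0).card : ℝ≥0∞) ^ α)
    ∂W.P i

/-- `V` is (a version of) the excursion measure `V_i^α`: it is carried by `(0,∞)` and has
the prescribed tails `V((x,∞)) = E_i (∑_{n=1}^{τ(i)} 1_{S_n⁻ > x})^α` for `x ≥ 0`. -/
def IsV (i : 𝕊) (α : ℝ) (V : Measure ℝ) : Prop :=
  V (Set.Iic 0) = 0 ∧ ∀ x : ℝ, 0 ≤ x → V (Set.Ioi x) = W.Vtail i α x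

/-- `∫ f dV_i^α < ∞`. -/
def VInt (i : 𝕊) (α : ℝ) (f : ℝ → ℝ≥0∞) : Prop :=
  ∃ V : Measure ℝ, W.IsV i α V ∧ ∫⁻ x, f x ∂V < ⊤

/-- First time `n ≥ 1` at which `A n` holds (`⊤` if there is none). -/
def firstTime (A : ℕ → Ω → Prop) (ω : Ω) : ℕ∞ :=
  sInf {e : ℕ∞ | ∃ n : ℕ, e = n ∧ 1 ≤ n ∧ A n ω}

/-- The level `x` first passage time `σ^>(x) = inf {n ≥ 1 : S n > x}`. -/
def σGt (x : ℝ) (ω : Ω) : ℕ∞ := firstTime (fun n ω => x < W.S n ω) ω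

/-- The first passage time `σ^≤(x) = inf {n ≥ 1 : S n ≤ x}` (apply with `x = -x₀`). -/
def σLe (x : ℝ) (ω : Ω) : ℕ∞ := firstTime (fun n ω => W.S n ω ≤ x) ω

/-- The post-`τ(M 0)`-passage time `σ̄^>(x) = inf {n > τ(M 0) : S n > x}`. -/
def σBarGt (x : ℝ) (ω : Ω) : ℕ∞ :=
  sInf {e : ℕ∞ | ∃ n : ℕ, e = n ∧ W.τ (W.M 0 ω) 1 ω < n ∧ x < W.S n ω}

/-- The level `x` last exit time `ρ(x) = sup {n ≥ 0 : S n ≤ x}`. -/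
def lastExit (x : ℝ) (ω : Ω) : ℕ∞ := sSup {e : ℕ∞ | ∃ n : ℕ, e = n ∧ W.S n ω ≤ x}

/-- The epoch `σ_min = inf {n ≥ 1 : S n = inf_{k ≥ 1} S k}` at which the minimum is hit. -/
def σmin (ω : Ω) : ℕ∞ := firstTime (fun n ω => W.S n ω = ⨅ k : ℕ, W.S (k + 1) ω) ω

/-- `ν(i,x) = inf {n ≥ 1 : S_{τ_n(i)} > x}`. -/
def ν (i : 𝕊) (x : ℝ) (ω : Ω) : ℕ∞ :=
  sInf {e : ℕ∞ | ∃ n : ℕ, e = n ∧ 1 ≤ n ∧ x < W.S (W.τ i n ω) ω}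

/-- The renewal counting variable `N(x) = ∑_{n ≥ 1} 1_{S n ≤ x}` (with value in `ℝ≥0∞`). -/
def Ncount (x : ℝ) (ω : Ω) : ℝ≥0∞ := ∑' n : ℕ, if W.S (n + 1) ω ≤ x then 1 else 0

/-- The MRW is of *type `α`* if `E_i τ(i)^{1+α} < ∞` (for all, equivalently some, `i`). -/
def TypeAlpha (α : ℝ) : Prop := ∀ i, ∫⁻ ω, (W.τ i 1 ω : ℝ≥0∞) ^ (1 + α) ∂W.P i < ⊤

/-- The random walk embedded at `i` is positive divergent. -/
def EmbPD (i : 𝕊) : Prop :=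
  ∀ᵐ ω ∂W.P i, Tendsto (fun n => W.S (W.τ i n ω) ω) atTop atTop

/-- The random walk embedded at `i` is negative divergent. -/
def EmbND (i : 𝕊) : Prop :=
  ∀ᵐ ω ∂W.P i, Tendsto (fun n => W.S (W.τ i n ω) ω) atTop atBot

/-- The random walk embedded at `i` oscillates. -/
def EmbOsc (i : 𝕊) : Prop :=
  ∀ᵐ ω ∂W.P i, OscSeq fun n => W.S (W.τ i n ω) ω

/-- `S_n^⊕ = ∑_{k=1}^n X_k⁺`. -/
def Splus (n : ℕ) (ω : Ω) : ℝ := ∑ k ∈ Finset.range n, max (W.X (k + 1) ω) 0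

/-- `S_n^⊖ = ∑_{k=1}^n X_k⁻`. -/
def Sminus (n : ℕ) (ω : Ω) : ℝ := ∑ k ∈ Finset.range n, max (-W.X (k + 1) ω) 0

/-- The strictly ascending ladder epochs `σ_n^>` (`ladderGt 0 = 0`, value `⊤` if there is
no further ladder epoch, in which case all later ones equal `⊤` as well). -/
def ladderGt : ℕ → Ω → ℕ∞
  | 0, _ => 0
  | n + 1, ω => sInf {e : ℕ∞ | ∃ k : ℕ, e = k ∧ ladderGt n ω < (k : ℕ∞) ∧
      W.S ((ladderGt n ω).toNat) ω < W.S k ω}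

/-- The strictly descending ladder epochs `σ_n^<`. -/
def ladderLt : ℕ → Ω → ℕ∞
  | 0, _ => 0
  | n + 1, ω => sInf {e : ℕ∞ | ∃ k : ℕ, e = k ∧ ladderLt n ω < (k : ℕ∞) ∧
      W.S k ω < W.S ((ladderLt n ω).toNat) ω}

/-- The supremum `σ_*` of the finite ladder epochs of the ladder-epoch sequence `lad`. -/
def ladderFinSup (lad : ℕ → Ω → ℕ∞) (ω : Ω) : ℕ∞ :=
  sSup {e : ℕ∞ | (∃ n, 1 ≤ n ∧ lad n ω = e) ∧ e ≠ ⊤}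

/-- The ladder chain associated with the ladder-epoch sequence `lad`:
`M_n^† = M_{σ_n^†}` on `{σ_n^† < ∞}` and `M_n^† = M_{σ_*^†}` on `{σ_n^† = ∞}`. -/
def Mladder (lad : ℕ → Ω → ℕ∞) (n : ℕ) (ω : Ω) : 𝕊 :=
  if lad n ω = ⊤ then W.M ((ladderFinSup lad ω).toNat) ω else W.M ((lad n ω).toNat) ω

/-- The strictly ascending ladder chain `(M_n^>)`. -/
def Mgt (n : ℕ) (ω : Ω) : 𝕊 := W.Mladder (W.ladderGt) n ω

/-- The strictly descending ladder chain `(M_n^<)`. -/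
def Mlt (n : ℕ) (ω : Ω) : 𝕊 := W.Mladder (W.ladderLt) n ω

/-- The function `J_π`: `J_π 0 = 1` and, for `x > 0`,
`J_π x = x / E_π ((X 1 ∧ x)⁺)` if `P_π (X 1 > 0) > 0`, and `J_π x = x` otherwise. -/
def Jπ (x : ℝ) : ℝ :=
  if x = 0 then 1
  else if 0 < W.Pπ {ω | 0 < W.X 1 ω} then x / ∫ ω, max (min (W.X 1 ω) x) 0 ∂W.Pπ
  else x

/-- `A_π(x) > 0` for all sufficiently large `x`, where
`A_π(x) = E_π ((X 1 ∧ x)⁺) - E_π ((X 1 ∧ x)⁻)` (stated by comparison of the two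
`ℝ≥0∞`-valued integrals, since the second one may be infinite). -/
def AπUltPos : Prop :=
  ∃ x₀ : ℝ, ∀ x ≥ x₀,
    ∫⁻ ω, ENNReal.ofReal (max (-min (W.X 1 ω) x) 0) ∂W.Pπ <
      ∫⁻ ω, ENNReal.ofReal (max (min (W.X 1 ω) x) 0) ∂W.Pπ

/-- `W'` is the dual MRW of `W`: same stationary distribution, time-reversed transition
probabilities `π_i p'_{ij} = π_j p_{ji}`, and reversed increment kernel `K'_{ij} = K_{ji}`. -/
def IsDual {Ω' : Type*} [MeasurableSpace Ω'] (W' : MRW 𝕊 Ω') : Prop :=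
  (∀ i, W'.π i = W.π i) ∧ (∀ i j, W.π i * W'.p i j = W.π j * W.p j i) ∧
    (∀ i j, W'.K i j = W.K j i)

/-- The weighted occupation series `∑_{n ≥ 1} n^{α-1} P_i (S n ≤ x)`. -/
def spitzerSeries (α : ℝ) (i : 𝕊) (x : ℝ) : ℝ≥0∞ :=
  ∑' n : ℕ, ((n : ℝ≥0∞) + 1) ^ (α - 1) * W.P i {ω | W.S (n + 1) ω ≤ x}

/-- `E_i σ^>(x)^β` (infinite if `σ^>(x) = ∞` with positive probability). -/
def EσGt (i : 𝕊) (x : ℝ) (β : ℝ) : ℝ≥0∞ := ∫⁻ ω, (W.σGt x ω : ℝ≥0∞) ^ β ∂W.P i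

/-- `E_i σ̄^>(x)^β`. -/
def EσBar (i : 𝕊) (x : ℝ) (β : ℝ) : ℝ≥0∞ := ∫⁻ ω, (W.σBarGt x ω : ℝ≥0∞) ^ β ∂W.P i

/-- `E_i ρ(x)^β`. -/
def Eρ (i : 𝕊) (x : ℝ) (β : ℝ) : ℝ≥0∞ := ∫⁻ ω, (W.lastExit x ω : ℝ≥0∞) ^ β ∂W.P i

/-- `E_i σ_min^β`. -/
def Eσmin (i : 𝕊) (β : ℝ) : ℝ≥0∞ := ∫⁻ ω, (W.σmin ω : ℝ≥0∞) ^ β ∂W.P i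

/-- `E_i [σ^≤(x)^β ; σ^≤(x) < ∞]`. -/
def EσLeFin (i : 𝕊) (x : ℝ) (β : ℝ) : ℝ≥0∞ :=
  ∫⁻ ω, (if W.σLe x ω = ⊤ then 0 else ((W.σLe x ω).toNat : ℝ≥0∞) ^ β) ∂W.P i

/-- `E_i [|S_{σ^≤(x)}|^β ; σ^≤(x) < ∞]`. -/
def ESσLe (i : 𝕊) (x : ℝ) (β : ℝ) : ℝ≥0∞ :=
  ∫⁻ ω, (if W.σLe x ω = ⊤ then 0
    else ENNReal.ofReal |W.S ((W.σLe x ω).toNat) ω| ^ β) ∂W.P i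

/-- `E_i N(x)^β`. -/
def EN (i : 𝕊) (x : ℝ) (β : ℝ) : ℝ≥0∞ := ∫⁻ ω, W.Ncount x ω ^ β ∂W.P i

/-- `E_i [τ_{ν(i,x)}(i)^β]` (infinite when `ν(i,x) = ∞`). -/
def Eτν (i : 𝕊) (x : ℝ) (β : ℝ) : ℝ≥0∞ :=
  ∫⁻ ω, (if W.ν i x ω = ⊤ then (⊤ : ℝ≥0∞)
    else (W.τ i ((W.ν i x ω).toNat) ω : ℝ≥0∞) ^ β) ∂W.P i

/-- `E_i J_i(D^i)^β`. -/
def EJD (i : 𝕊) (β : ℝ) : ℝ≥0∞ :=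
  ∫⁻ ω, ENNReal.ofReal (W.J i (W.D i ω)) ^ β ∂W.P i

/-- `E_i J_i(S_{τ(i)}⁻)^β`. -/
def EJSτneg (i : 𝕊) (β : ℝ) : ℝ≥0∞ :=
  ∫⁻ ω, ENNReal.ofReal (W.J i (W.Sτneg i ω)) ^ β ∂W.P i

/-- `E_i (D^i)^β J_i(D^i)`. -/
def EDJD (i : 𝕊) (β : ℝ) : ℝ≥0∞ :=
  ∫⁻ ω, ENNReal.ofReal (W.D i ω) ^ β * ENNReal.ofReal (W.J i (W.D i ω)) ∂W.P i

/-- `E_i (S_{τ(i)}⁻)^β J_i(S_{τ(i)}⁻)`. -/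
def ESτnegJ (i : 𝕊) (β : ℝ) : ℝ≥0∞ :=
  ∫⁻ ω, ENNReal.ofReal (W.Sτneg i ω) ^ β * ENNReal.ofReal (W.J i (W.Sτneg i ω)) ∂W.P i

/-- `E_i Ĵ_i(S_{τ(i)}⁺)^β` for the reflected walk. -/
def EJreflSτpos (i : 𝕊) (β : ℝ) : ℝ≥0∞ :=
  ∫⁻ ω, ENNReal.ofReal (W.Jrefl i (W.Sτpos i ω)) ^ β ∂W.P i

/-- `E_i (S_{τ(i)}⁺)^β Ĵ_i(S_{τ(i)}⁺)` for the reflected walk. -/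
def ESτposJrefl (i : 𝕊) (β : ℝ) : ℝ≥0∞ :=
  ∫⁻ ω, ENNReal.ofReal (W.Sτpos i ω) ^ β * ENNReal.ofReal (W.Jrefl i (W.Sτpos i ω)) ∂W.P i

/-- `E_i |min_{n ≥ 0} S n|^β`. -/
def EminS (i : 𝕊) (β : ℝ) : ℝ≥0∞ :=
  ∫⁻ ω, ENNReal.ofReal |⨅ n : ℕ, W.S n ω| ^ β ∂W.P i

/-- `E_π J_π(X_1⁻)^β`. -/
def EJπ (β : ℝ) : ℝ≥0∞ :=
  ∫⁻ ω, ENNReal.ofReal (W.Jπ (max (-W.X 1 ω) 0)) ^ β ∂W.Pπ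

/-- `E_π (X_1⁻)^β J_π(X_1⁻)`. -/
def EXnegJπ (β : ℝ) : ℝ≥0∞ :=
  ∫⁻ ω, ENNReal.ofReal (max (-W.X 1 ω) 0) ^ β *
    ENNReal.ofReal (W.Jπ (max (-W.X 1 ω) 0)) ∂W.Pπ

end MRW

variable {𝕊 : Type*} {Ω : Type*} [Countable 𝕊] [MeasurableSpace 𝕊]
  [MeasurableSingletonClass 𝕊] [MeasurableSpace Ω]

/-!
Telescoping the increments gives `S n = g (M n) - g (M 0)`, and by recurrence the driving chain
visits every state infinitely often (both `P_π`-a.s.). So `S n` returns infinitely often to each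
value `g j - g (M 0)` and takes no others: `limsup S n = sup g - g (M 0)` and
`liminf S n = inf g - g (M 0)`, whose finiteness is decided by the boundedness of `g`.
Since `S` is strictly monotone along the ladder epochs while its value at any visit to `i` is
`g i - g (M 0)`, a ladder chain visits each state at most once.
-/

open Function

section FrequentVisits

variable {ι : Type*} {m : ℕ → ι}

theorem le_limsup_coe_sub (hm : ∀ j, ∃ᶠ n in atTop, m n = j) (f : ι → ℝ) (c : ℝ) (j : ι) :
    ((f j - c : ℝ) : EReal) ≤ limsup (fun n => ((f (m n) - c : ℝ) : EReal)) atTop :=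
  le_limsup_of_frequently_le ((hm j).mono fun n hn => by rw [hn])

theorem liminf_coe_sub_le (hm : ∀ j, ∃ᶠ n in atTop, m n = j) (f : ι → ℝ) (c : ℝ) (j : ι) :
    liminf (fun n => ((f (m n) - c : ℝ) : EReal)) atTop ≤ ((f j - c : ℝ) : EReal) :=
  liminf_le_of_frequently_le ((hm j).mono fun n hn => by rw [hn])

theorem limsup_coe_sub_eq_top_iff (hm : ∀ j, ∃ᶠ n in atTop, m n = j) (f : ι → ℝ) (c : ℝ) :
    limsup (fun n => ((f (m n) - c : ℝ) : EReal)) atTop = ⊤ ↔ ¬BddAbove (range f) := by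
  constructor
  · rintro htop ⟨C, hC⟩
    have hle : limsup (fun n => ((f (m n) - c : ℝ) : EReal)) atTop ≤ ((C - c : ℝ) : EReal) :=
      limsup_le_of_le (by isBoundedDefault) (Eventually.of_forall fun n =>
        EReal.coe_le_coe (by linarith [hC (mem_range_self (m n))]))
    exact EReal.coe_ne_top _ (top_le_iff.1 (htop ▸ hle))
  · intro hf
    refine (EReal.eq_top_iff_forall_lt _).2 fun y => ?_
    obtain ⟨_, ⟨j, rfl⟩, hj⟩ := not_bddAbove_iff.1 hf (y + c)
    exact (EReal.coe_lt_coe (by linarith)).trans_le (le_limsup_coe_sub hm f c j)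

theorem liminf_coe_sub_eq_bot_iff (hm : ∀ j, ∃ᶠ n in atTop, m n = j) (f : ι → ℝ) (c : ℝ) :
    liminf (fun n => ((f (m n) - c : ℝ) : EReal)) atTop = ⊥ ↔ ¬BddBelow (range f) := by
  constructor
  · rintro hbot ⟨C, hC⟩
    have hle : ((C - c : ℝ) : EReal) ≤ liminf (fun n => ((f (m n) - c : ℝ) : EReal)) atTop :=
      le_liminf_of_le (by isBoundedDefault) (Eventually.of_forall fun n =>
        EReal.coe_le_coe (by linarith [hC (mem_range_self (m n))]))
    exact EReal.coe_ne_bot _ (le_bot_iff.1 (hbot ▸ hle))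
  · intro hf
    refine (EReal.eq_bot_iff_forall_lt _).2 fun y => ?_
    obtain ⟨_, ⟨j, rfl⟩, hj⟩ := not_bddBelow_iff.1 hf (y + c)
    exact (liminf_coe_sub_le hm f c j).trans_lt (EReal.coe_lt_coe (by linarith))

theorem liminf_limsup_coe_sub_of_frequently (hm : ∀ j, ∃ᶠ n in atTop, m n = j)
    (f : ι → ℝ) (c : ℝ) :
    (liminf (fun n => ((f (m n) - c : ℝ) : EReal)) atTop = ⊥ ↔ ¬BddBelow (range f)) ∧
      liminf (fun n => ((f (m n) - c : ℝ) : EReal)) atTop ≠ ⊤ ∧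
      (limsup (fun n => ((f (m n) - c : ℝ) : EReal)) atTop = ⊤ ↔ ¬BddAbove (range f)) ∧
      limsup (fun n => ((f (m n) - c : ℝ) : EReal)) atTop ≠ ⊥ :=
  ⟨liminf_coe_sub_eq_bot_iff hm f c,
    ((liminf_coe_sub_le hm f c (m 0)).trans_lt (EReal.coe_lt_top _)).ne,
    limsup_coe_sub_eq_top_iff hm f c,
    ((EReal.bot_lt_coe _).trans_le (le_limsup_coe_sub hm f c (m 0))).ne'⟩

end FrequentVisits

theorem bddAbove_range_abs_iff {ι : Type*} {g : ι → ℝ} :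
    BddAbove (range fun i => |g i|) ↔ BddBelow (range g) ∧ BddAbove (range g) := by
  rw [← isBounded_iff_bddBelow_bddAbove, isBounded_iff_forall_norm_le, bddAbove_def]
  simp only [forall_mem_range, Real.norm_eq_abs]

section Alternatives

variable {ι : Type*}

theorem exists_alternative {μ : Measure Ω} {Z : Prop}
    (g : ι → ℝ) (lo hi : Ω → EReal) (hZ : (∀ i, g i = 0) → Z)
    (h : ∀ᵐ ω ∂μ, (lo ω = ⊥ ↔ ¬BddBelow (range g)) ∧ lo ω ≠ ⊤ ∧
      (hi ω = ⊤ ↔ ¬BddAbove (range g)) ∧ hi ω ≠ ⊥) :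
    ∃ k : Fin 5, ![(∀ i, g i = 0) ∧ Z,
      (∃ i, g i ≠ 0) ∧ BddAbove (range fun i => |g i|) ∧ ∀ᵐ ω ∂μ, lo ω ≠ ⊥ ∧ hi ω ≠ ⊤,
      ¬BddBelow (range g) ∧ BddAbove (range g) ∧ ∀ᵐ ω ∂μ, lo ω = ⊥ ∧ hi ω ≠ ⊥ ∧ hi ω ≠ ⊤,
      BddBelow (range g) ∧ ¬BddAbove (range g) ∧ ∀ᵐ ω ∂μ, lo ω ≠ ⊥ ∧ lo ω ≠ ⊤ ∧ hi ω = ⊤,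
      ¬BddBelow (range g) ∧ ¬BddAbove (range g) ∧ ∀ᵐ ω ∂μ, lo ω = ⊥ ∧ hi ω = ⊤] k := by
  by_cases h0 : ∀ i, g i = 0
  · exact ⟨0, h0, hZ h0⟩
  push Not at h0
  by_cases hB : BddBelow (range g) <;> by_cases hA : BddAbove (range g)
  · exact ⟨1, h0, bddAbove_range_abs_iff.2 ⟨hB, hA⟩, h.mono fun ω hω => by tauto⟩
  · exact ⟨3, hB, hA, h.mono fun ω hω => by tauto⟩
  · exact ⟨2, hB, hA, h.mono fun ω hω => by tauto⟩
  · exact ⟨4, hB, hA, h.mono fun ω hω => by tauto⟩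

theorem alternative_unique {P₀ P₁ P₂ P₃ P₄ Q₀ Q₁ Q₂ Q₃ Q₄ : Prop} (g : ι → ℝ) {k l : Fin 5}
    (hk : ![(∀ i, g i = 0) ∧ P₀, (∃ i, g i ≠ 0) ∧ BddAbove (range fun i => |g i|) ∧ P₁,
      ¬BddBelow (range g) ∧ BddAbove (range g) ∧ P₂,
      BddBelow (range g) ∧ ¬BddAbove (range g) ∧ P₃,
      ¬BddBelow (range g) ∧ ¬BddAbove (range g) ∧ P₄] k)
    (hl : ![(∀ i, g i = 0) ∧ Q₀, (∃ i, g i ≠ 0) ∧ BddAbove (range fun i => |g i|) ∧ Q₁,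
      ¬BddBelow (range g) ∧ BddAbove (range g) ∧ Q₂,
      BddBelow (range g) ∧ ¬BddAbove (range g) ∧ Q₃,
      ¬BddBelow (range g) ∧ ¬BddAbove (range g) ∧ Q₄] l) :
    k = l := by
  have hzero : (∀ i, g i = 0) → BddBelow (range g) ∧ BddAbove (range g) := fun h0 =>
    have hsub : range g ⊆ {0} := range_subset_singleton.2 (funext h0)
    ⟨bddBelow_singleton.mono hsub, bddAbove_singleton.mono hsub⟩
  rw [bddAbove_range_abs_iff] at hk hl
  fin_cases k <;> fin_cases l <;> simp_all

end Alternatives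

namespace MRW

variable (W : MRW 𝕊 Ω)

theorem ae_Pπ_iff {p : Ω → Prop} : (∀ᵐ ω ∂W.Pπ, p ω) ↔ ∀ i, ∀ᵐ ω ∂W.P i, p ω := by
  rw [Pπ, Measure.ae_sum_iff]
  exact forall_congr' fun i => Measure.ae_ennreal_smul_measure_iff (W.πpos i).ne'

theorem S_eq_sub_of_X_eq {g : 𝕊 → ℝ} {ω : Ω}
    (hX : ∀ n : ℕ, 1 ≤ n → W.X n ω = g (W.M n ω) - g (W.M (n - 1) ω)) (n : ℕ) :
    W.S n ω = g (W.M n ω) - g (W.M 0 ω) := by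
  rw [S, ← Finset.sum_range_sub fun k => g (W.M k ω)]
  exact Finset.sum_congr rfl fun k _ => hX (k + 1) (Nat.le_add_left 1 k)

theorem ae_S_eq_sub {g : 𝕊 → ℝ}
    (hg : ∀ n : ℕ, 1 ≤ n → ∀ᵐ ω ∂W.Pπ, W.X n ω = g (W.M n ω) - g (W.M (n - 1) ω)) :
    ∀ᵐ ω ∂W.Pπ, ∀ n, W.S n ω = g (W.M n ω) - g (W.M 0 ω) :=
  (ae_all_iff.2 fun n => eventually_imp_distrib_left.2 (hg n)).mono fun _ hX =>
    W.S_eq_sub_of_X_eq hX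

theorem ae_frequently_M_eq (i : 𝕊) : ∀ᵐ ω ∂W.P i, ∀ j, ∃ᶠ n in atTop, W.M n ω = j := by
  have := W.isProb i
  refine ae_all_iff.2 fun j => ?_
  have hM := W.measM
  have hmeas : MeasurableSet {ω | ∀ N, ∃ n ≥ N, W.M n ω = j} :=
    measurableSet_setOfPred.2 (by fun_prop)
  simp only [frequently_atTop]
  rw [ae_iff_measure_eq hmeas.nullMeasurableSet, measure_univ, W.recurrent i j]

theorem S_ladderGt_lt_succ {n : ℕ} {ω : Ω} (h : W.ladderGt (n + 1) ω ≠ ⊤) :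
    W.S (W.ladderGt n ω).toNat ω < W.S (W.ladderGt (n + 1) ω).toNat ω := by
  rw [ladderGt] at h ⊢
  obtain ⟨k, hk, -, hlt⟩ := csInf_mem
    (nonempty_iff_ne_empty.2 (ne_of_apply_ne sInf (ne_of_ne_of_eq h sInf_empty.symm)))
  rw [hk]
  simpa using hlt

theorem S_ladderLt_succ_lt {n : ℕ} {ω : Ω} (h : W.ladderLt (n + 1) ω ≠ ⊤) :
    W.S (W.ladderLt (n + 1) ω).toNat ω < W.S (W.ladderLt n ω).toNat ω := by
  rw [ladderLt] at h ⊢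
  obtain ⟨k, hk, -, hlt⟩ := csInf_mem
    (nonempty_iff_ne_empty.2 (ne_of_apply_ne sInf (ne_of_ne_of_eq h sInf_empty.symm)))
  rw [hk]
  simpa using hlt

theorem ae_forall_ne_top {μ : Measure Ω} {lad : ℕ → Ω → ℕ∞} (h0 : ∀ ω, lad 0 ω = 0)
    (hfin : ∀ n : ℕ, 1 ≤ n → ∀ᵐ ω ∂μ, lad n ω ≠ ⊤) : ∀ᵐ ω ∂μ, ∀ n, lad n ω ≠ ⊤ :=
  ae_all_iff.2 fun n => n.casesOn (.of_forall fun ω => by simp [h0 ω])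
    fun n => hfin (n + 1) (Nat.le_add_left 1 n)

theorem injective_Mladder {g : 𝕊 → ℝ} {lad : ℕ → Ω → ℕ∞} {ω : Ω}
    (hS : ∀ n, W.S n ω = g (W.M n ω) - g (W.M 0 ω)) (hfin : ∀ n, lad n ω ≠ ⊤)
    (hinj : Injective fun n => W.S (lad n ω).toNat ω) :
    Injective fun n => W.Mladder lad n ω := by
  have hcomp : (fun n => W.S (lad n ω).toNat ω) =
      (fun j => g j - g (W.M 0 ω)) ∘ fun n => W.Mladder lad n ω :=
    funext fun n => by simp only [comp_apply, Mladder, if_neg (hfin n), hS]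
  exact Injective.of_comp (hcomp ▸ hinj)

theorem measure_frequently_Mladder_eq_zero {g : 𝕊 → ℝ} {lad : ℕ → Ω → ℕ∞} {i : 𝕊}
    (hS : ∀ᵐ ω ∂W.P i, ∀ n, W.S n ω = g (W.M n ω) - g (W.M 0 ω))
    (hlad : ∀ᵐ ω ∂W.P i, (∀ n, lad n ω ≠ ⊤) ∧ Injective fun n => W.S (lad n ω).toNat ω) :
    W.P i {ω | ∀ N, ∃ n ≥ N, W.Mladder lad n ω = i} = 0 := by
  refine measure_eq_zero_iff_ae_notMem.2 ?_
  filter_upwards [hS, hlad] with ω hSω ⟨hfin, hinj⟩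
  have hne : ∀ᶠ n in atTop, W.Mladder lad n ω ≠ i := Nat.cofinite_eq_atTop ▸
    (W.injective_Mladder hSω hfin hinj).tendsto_cofinite.eventually (eventually_cofinite_ne i)
  simpa only [mem_ofPred_eq, ← frequently_atTop, not_frequently] using hne

theorem Mgt_transient {g : 𝕊 → ℝ}
    (hS : ∀ i, ∀ᵐ ω ∂W.P i, ∀ n, W.S n ω = g (W.M n ω) - g (W.M 0 ω))
    (hfin : ∀ i, ∀ n : ℕ, 1 ≤ n → ∀ᵐ ω ∂W.P i, W.ladderGt n ω ≠ ⊤) (i : 𝕊) :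
    W.P i {ω | ∀ N, ∃ n ≥ N, W.Mgt n ω = i} < 1 := by
  refine (W.measure_frequently_Mladder_eq_zero (lad := W.ladderGt) (hS i) ?_).trans_lt
    zero_lt_one
  filter_upwards [ae_forall_ne_top (fun _ => rfl) (hfin i)] with ω hω
  exact ⟨hω, (strictMono_nat_of_lt_succ fun n =>
    W.S_ladderGt_lt_succ (n := n) (hω (n + 1))).injective⟩

theorem Mlt_transient {g : 𝕊 → ℝ}
    (hS : ∀ i, ∀ᵐ ω ∂W.P i, ∀ n, W.S n ω = g (W.M n ω) - g (W.M 0 ω))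
    (hfin : ∀ i, ∀ n : ℕ, 1 ≤ n → ∀ᵐ ω ∂W.P i, W.ladderLt n ω ≠ ⊤) (i : 𝕊) :
    W.P i {ω | ∀ N, ∃ n ≥ N, W.Mlt n ω = i} < 1 := by
  refine (W.measure_frequently_Mladder_eq_zero (lad := W.ladderLt) (hS i) ?_).trans_lt
    zero_lt_one
  filter_upwards [ae_forall_ne_top (fun _ => rfl) (hfin i)] with ω hω
  exact ⟨hω, (strictAnti_nat_of_succ_lt fun n =>
    W.S_ladderLt_succ_lt (n := n) (hω (n + 1))).injective⟩

end MRW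

/-- **Classification of null-homologous Markov random walks.**
If `X_n = g(M_n) - g(M_{n-1})` `P_π`-a.s. for all `n ≥ 1`, then exactly one of the five
alternatives (NH-1)–(NH-5) holds; moreover, whenever for `† ∈ {>, <}` all ladder epochs
`σ_n^†` are a.s. finite, the associated ladder chain is transient. -/
theorem null_homologous_classification (W : MRW 𝕊 Ω) (g : 𝕊 → ℝ)
    (hg : ∀ n : ℕ, 1 ≤ n → ∀ᵐ ω ∂W.Pπ, W.X n ω = g (W.M n ω) - g (W.M (n - 1) ω)) :
    (∃! k : Fin 5,
      ![(∀ i, g i = 0) ∧ ∀ n : ℕ, 1 ≤ n → ∀ i, ∀ᵐ ω ∂W.P i, W.S n ω = 0,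
        (∃ i, g i ≠ 0) ∧ BddAbove (Set.range fun i => |g i|) ∧
          ∀ᵐ ω ∂W.Pπ,
            Filter.liminf (fun n => (W.S n ω : EReal)) Filter.atTop ≠ ⊥ ∧
            Filter.limsup (fun n => (W.S n ω : EReal)) Filter.atTop ≠ ⊤,
        ¬BddBelow (Set.range g) ∧ BddAbove (Set.range g) ∧
          ∀ᵐ ω ∂W.Pπ,
            Filter.liminf (fun n => (W.S n ω : EReal)) Filter.atTop = ⊥ ∧
            Filter.limsup (fun n => (W.S n ω : EReal)) Filter.atTop ≠ ⊥ ∧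
            Filter.limsup (fun n => (W.S n ω : EReal)) Filter.atTop ≠ ⊤,
        BddBelow (Set.range g) ∧ ¬BddAbove (Set.range g) ∧
          ∀ᵐ ω ∂W.Pπ,
            Filter.liminf (fun n => (W.S n ω : EReal)) Filter.atTop ≠ ⊥ ∧
            Filter.liminf (fun n => (W.S n ω : EReal)) Filter.atTop ≠ ⊤ ∧
            Filter.limsup (fun n => (W.S n ω : EReal)) Filter.atTop = ⊤,
        ¬BddBelow (Set.range g) ∧ ¬BddAbove (Set.range g) ∧
          ∀ᵐ ω ∂W.Pπ,
            Filter.liminf (fun n => (W.S n ω : EReal)) Filter.atTop = ⊥ ∧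
            Filter.limsup (fun n => (W.S n ω : EReal)) Filter.atTop = ⊤] k) ∧
    ((∀ i, ∀ n : ℕ, 1 ≤ n → ∀ᵐ ω ∂W.P i, W.ladderGt n ω ≠ ⊤) →
      ∀ i, W.P i {ω | ∀ N, ∃ n ≥ N, W.Mgt n ω = i} < 1) ∧
    ((∀ i, ∀ n : ℕ, 1 ≤ n → ∀ᵐ ω ∂W.P i, W.ladderLt n ω ≠ ⊤) →
      ∀ i, W.P i {ω | ∀ N, ∃ n ≥ N, W.Mlt n ω = i} < 1) := by
  have hS := W.ae_S_eq_sub hg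
  have hSi := W.ae_Pπ_iff.1 hS
  have hzero : (∀ i, g i = 0) → ∀ n : ℕ, 1 ≤ n → ∀ i, ∀ᵐ ω ∂W.P i, W.S n ω = 0 :=
    fun h0 n _ i => (hSi i).mono fun ω hSω => by rw [hSω, h0, h0, sub_zero]
  have hbounds : ∀ᵐ ω ∂W.Pπ,
      (liminf (fun n => (W.S n ω : EReal)) atTop = ⊥ ↔ ¬BddBelow (range g)) ∧
      liminf (fun n => (W.S n ω : EReal)) atTop ≠ ⊤ ∧
      (limsup (fun n => (W.S n ω : EReal)) atTop = ⊤ ↔ ¬BddAbove (range g)) ∧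
      limsup (fun n => (W.S n ω : EReal)) atTop ≠ ⊥ := by
    filter_upwards [hS, W.ae_Pπ_iff.2 W.ae_frequently_M_eq] with ω hSω hrec
    simpa only [hSω] using liminf_limsup_coe_sub_of_frequently hrec g (g (W.M 0 ω))
  obtain ⟨k, hk⟩ := exists_alternative g _ _ hzero hbounds
  exact ⟨⟨k, hk, fun l hl => alternative_unique g hl hk⟩, W.Mgt_transient hSi,
    W.Mlt_transient hSi⟩
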